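/- arXiv:2212.03842 — 7 statements merged into one kernel-verified Lean document; each statement's English description precedes it below -/
import Mathlib

section
/- Let A be a finite set. The poset 𝒢ₙ(A) of acyclic directed complete graphs on A with edge-weights in {1,…,n}, ordered by: g ≤ h iff for every edge a →ᵛ b in g, either a →ʷ b in h with v ≤ w, or b →ʷ a in h with v < w strictly, is a partial order (reflexive, antisymmetric, transitive). -/
/-- A directed weighted complete graph on a vertex set `A`, with weights in `{1,…,n}`:
for each pair of distinct vertices there is exactly one direction, and a weight in `{1,…,n}`
(weights are recorded symmetrically, and are `0` on the diagonal for normalisation). -/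
structure CGraph (A : Type) (n : ℕ) where
  dir : A → A → Prop
  wt : A → A → ℕ
  dir_irrefl : ∀ a, ¬ dir a a
  dir_total : ∀ a b, a ≠ b → (dir a b ↔ ¬ dir b a)
  wt_symm : ∀ a b, wt a b = wt b a
  wt_irrefl : ∀ a, wt a a = 0
  wt_pos : ∀ a b, a ≠ b → 1 ≤ wt a b
  wt_le_n : ∀ a b, a ≠ b → wt a b ≤ n

/-- The order on weighted complete graphs: `g ≤ h` iff for every edge `a →ᵛ b` of `g`,
either `a →ʷ b` in `h` with `v ≤ w`, or `b →ʷ a` in `h` with `v < w` strictly. -/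
def CGraph.le {A : Type} {n : ℕ} (g h : CGraph A n) : Prop :=
  ∀ a b, a ≠ b → g.dir a b →
    (h.dir a b ∧ g.wt a b ≤ h.wt a b) ∨ (h.dir b a ∧ g.wt a b < h.wt b a)

/-- A complete directed graph is acyclic iff its direction relation is transitive,
i.e. the directions define a linear order on the vertices. -/
def CGraph.Acyclic {A : Type} {n : ℕ} (g : CGraph A n) : Prop :=
  ∀ a b c, g.dir a b → g.dir b c → g.dir a c

namespace CGraph

variable {A : Type} {n : ℕ}

theorem dir_or_dir (g : CGraph A n) {a b : A} (hab : a ≠ b) : g.dir a b ∨ g.dir b a :=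
  or_iff_not_imp_left.mpr (g.dir_total b a hab.symm).mpr

theorem not_dir_of_dir (g : CGraph A n) {a b : A} (hab : a ≠ b) (hd : g.dir a b) :
    ¬ g.dir b a :=
  (g.dir_total a b hab).mp hd

@[ext]
theorem ext {g h : CGraph A n} (hdir : g.dir = h.dir) (hwt : g.wt = h.wt) : g = h := by
  cases g; cases h
  subst hdir hwt
  rfl

theorem le_refl (g : CGraph A n) : g.le g :=
  fun _ _ _ hd => Or.inl ⟨hd, le_rfl⟩

theorem le_trans {g h k : CGraph A n} (hgh : g.le h) (hhk : h.le k) : g.le k := by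
  intro a b hab hd
  rcases hgh a b hab hd with ⟨hab_h, hle⟩ | ⟨hba_h, hlt⟩
  · rcases hhk a b hab hab_h with ⟨hab_k, hle'⟩ | ⟨hba_k, hlt'⟩
    · exact Or.inl ⟨hab_k, hle.trans hle'⟩
    · exact Or.inr ⟨hba_k, hle.trans_lt hlt'⟩
  · rcases hhk b a hab.symm hba_h with ⟨hba_k, hle'⟩ | ⟨hab_k, hlt'⟩
    · exact Or.inr ⟨hba_k, hlt.trans_le hle'⟩
    · exact Or.inl ⟨hab_k, (hlt.trans hlt').le⟩

/-- If `g ≤ h ≤ g`, an edge of `g` cannot be reversed in `h`: its weight would strictly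
increase on the way to `h` and again on the way back. -/
theorem dir_and_wt_eq_of_le_of_le {g h : CGraph A n} (hgh : g.le h) (hhg : h.le g)
    {a b : A} (hab : a ≠ b) (hd : g.dir a b) : h.dir a b ∧ g.wt a b = h.wt a b := by
  rcases hgh a b hab hd with ⟨hab_h, hle⟩ | ⟨hba_h, hlt⟩
  · rcases hhg a b hab hab_h with ⟨_, hle'⟩ | ⟨hba_g, _⟩
    · exact ⟨hab_h, hle.antisymm hle'⟩
    · exact absurd hba_g (g.not_dir_of_dir hab hd)
  · rcases hhg b a hab.symm hba_h with ⟨hba_g, _⟩ | ⟨_, hlt'⟩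
    · exact absurd hba_g (g.not_dir_of_dir hab hd)
    · exact absurd (hlt.trans hlt') (lt_irrefl _)

theorem le_antisymm {g h : CGraph A n} (hgh : g.le h) (hhg : h.le g) : g = h := by
  ext a b
  · by_cases hab : a = b
    · subst hab
      exact iff_of_false (g.dir_irrefl a) (h.dir_irrefl a)
    · exact ⟨fun hd => (dir_and_wt_eq_of_le_of_le hgh hhg hab hd).1,
        fun hd => (dir_and_wt_eq_of_le_of_le hhg hgh hab hd).1⟩
  · by_cases hab : a = b
    · subst hab
      rw [g.wt_irrefl, h.wt_irrefl]
    · rcases g.dir_or_dir hab with hd | hd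
      · exact (dir_and_wt_eq_of_le_of_le hgh hhg hab hd).2
      · rw [g.wt_symm, h.wt_symm]
        exact (dir_and_wt_eq_of_le_of_le hgh hhg (Ne.symm hab) hd).2

end CGraph

theorem statement1_general (A : Type) (n : ℕ) :
    (∀ g : {g : CGraph A n // g.Acyclic}, g.1.le g.1) ∧
    (∀ g h : {g : CGraph A n // g.Acyclic}, g.1.le h.1 → h.1.le g.1 → g = h) ∧
    (∀ g h k : {g : CGraph A n // g.Acyclic}, g.1.le h.1 → h.1.le k.1 → g.1.le k.1) :=
  ⟨fun g => g.1.le_refl,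
    fun _ _ hgh hhg => Subtype.ext (CGraph.le_antisymm hgh hhg),
    fun _ _ _ hgh hhk => CGraph.le_trans hgh hhk⟩

/-- the relation `≤` on the set `𝒢ₙ(A)` of acyclic directed weighted complete
graphs on a finite set `A` is reflexive, antisymmetric and transitive, i.e. a partial order. -/
theorem statement1 (A : Type) [Finite A] (n : ℕ) :
    (∀ g : {g : CGraph A n // g.Acyclic}, g.1.le g.1) ∧
    (∀ g h : {g : CGraph A n // g.Acyclic}, g.1.le h.1 → h.1.le g.1 → g = h) ∧
    (∀ g h k : {g : CGraph A n // g.Acyclic}, g.1.le h.1 → h.1.le k.1 → g.1.le k.1) :=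
  statement1_general A n
end

section
/- For finite sets A, B, an element a ∈ A, and acyclic directed weighted complete graphs g ∈ 𝒢ₙ(A), h ∈ 𝒢ₙ(B), the graph g ∘_a h on A[B/a] = (A∖{a}) ⊔ B defined by: (1) a' →ʷ a'' if a',a'' ∈ A∖{a} and a' →ʷ a'' in g; (2) b →ʷ b' if b,b' ∈ B and b →ʷ b' in h; (3) a' →ʷ b if a' ∈ A∖{a}, b ∈ B, and a' →ʷ a in g; (4) b →ʷ a' if a' ∈ A∖{a}, b ∈ B, and a →ʷ a' in g, is again acyclic. Moreover, the composition map ∘_a: 𝒢ₙ(A) × 𝒢ₙ(B) → 𝒢ₙ(A[B/a]) is monotone with respect to the product order. -/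
/-- The direction relation of the composite graph `g ∘_a h` on `A[B/a] = (A∖{a}) ⊕ B`. -/
def dirComp {A B : Type} {n : ℕ} (g : CGraph A n) (a : A) (h : CGraph B n) :
    ({x : A // x ≠ a} ⊕ B) → ({x : A // x ≠ a} ⊕ B) → Prop
  | .inl x, .inl y => g.dir x.1 y.1
  | .inl x, .inr _ => g.dir x.1 a
  | .inr _, .inl y => g.dir a y.1
  | .inr b, .inr b' => h.dir b b'

/-- The weight function of the composite graph `g ∘_a h` on `A[B/a] = (A∖{a}) ⊕ B`. -/
def wtComp {A B : Type} {n : ℕ} (g : CGraph A n) (a : A) (h : CGraph B n) :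
    ({x : A // x ≠ a} ⊕ B) → ({x : A // x ≠ a} ⊕ B) → ℕ
  | .inl x, .inl y => g.wt x.1 y.1
  | .inl x, .inr _ => g.wt x.1 a
  | .inr _, .inl y => g.wt a y.1
  | .inr b, .inr b' => h.wt b b'

/-!
In `g ∘_a h` the vertices of `B` are related among themselves by `h`, and to `A ∖ {a}` exactly as
`a` is in `g`. So every transitivity triangle and every edge comparison reduces to one in `g` or
in `h`, except a path `b → y → b'` through `y ∈ A ∖ {a}`, which would give `a → y → a` in `g`.
-/

namespace CGraph

variable {A B : Type} {n : ℕ}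

theorem dir_asymm (g : CGraph A n) {x y : A} (hxy : g.dir x y) : ¬ g.dir y x :=
  g.dir_total x y (by rintro rfl; exact g.dir_irrefl x hxy) |>.mp hxy

theorem val_ne_val_of_inl_ne_inl {a : A} {x y : {x : A // x ≠ a}}
    (hxy : (Sum.inl x : {x : A // x ≠ a} ⊕ B) ≠ Sum.inl y) : x.1 ≠ y.1 :=
  Subtype.val_injective.ne (ne_of_apply_ne Sum.inl hxy)

/-- The operadic composite `g ∘_a h ∈ 𝒢ₙ(A[B/a])`. -/
def comp (g : CGraph A n) (a : A) (h : CGraph B n) : CGraph ({x : A // x ≠ a} ⊕ B) n where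
  dir := dirComp g a h
  wt := wtComp g a h
  dir_irrefl := by
    rintro (x | b)
    exacts [g.dir_irrefl x.1, h.dir_irrefl b]
  dir_total := by
    rintro (x | b) (y | b') hne
    exacts [g.dir_total _ _ (val_ne_val_of_inl_ne_inl hne), g.dir_total _ _ x.2,
      g.dir_total _ _ (Ne.symm y.2), h.dir_total _ _ (ne_of_apply_ne Sum.inr hne)]
  wt_symm := by
    rintro (x | b) (y | b')
    exacts [g.wt_symm _ _, g.wt_symm _ _, g.wt_symm _ _, h.wt_symm _ _]
  wt_irrefl := by
    rintro (x | b)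
    exacts [g.wt_irrefl x.1, h.wt_irrefl b]
  wt_pos := by
    rintro (x | b) (y | b') hne
    exacts [g.wt_pos _ _ (val_ne_val_of_inl_ne_inl hne), g.wt_pos _ _ x.2,
      g.wt_pos _ _ (Ne.symm y.2), h.wt_pos _ _ (ne_of_apply_ne Sum.inr hne)]
  wt_le_n := by
    rintro (x | b) (y | b') hne
    exacts [g.wt_le_n _ _ (val_ne_val_of_inl_ne_inl hne), g.wt_le_n _ _ x.2,
      g.wt_le_n _ _ (Ne.symm y.2), h.wt_le_n _ _ (ne_of_apply_ne Sum.inr hne)]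

theorem Acyclic.comp {g : CGraph A n} {h : CGraph B n} (hg : g.Acyclic) (hh : h.Acyclic)
    (a : A) : (g.comp a h).Acyclic := by
  rintro (x | b) (y | b') (z | b'') hpq hqr
  · exact hg _ _ _ hpq hqr
  · exact hg _ _ _ hpq hqr
  · exact hg _ _ _ hpq hqr
  · exact hpq
  · exact hg _ _ _ hpq hqr
  · exact absurd hqr (g.dir_asymm hpq)
  · exact hqr
  · exact hh _ _ _ hpq hqr

theorem comp_le_comp {g g' : CGraph A n} {h h' : CGraph B n} (hg : g.le g') (hh : h.le h')
    (a : A) : (g.comp a h).le (g'.comp a h') := by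
  rintro (x | b) (y | b') hne
  exacts [hg _ _ (val_ne_val_of_inl_ne_inl hne), hg _ _ x.2, hg _ _ (Ne.symm y.2),
    hh _ _ (ne_of_apply_ne Sum.inr hne)]

end CGraph

/-- the operadic composite `g ∘_a h` of acyclic directed weighted complete graphs
is again acyclic, and composition is monotone in both arguments with respect to the order on
weighted complete graphs. -/
theorem statement2 {A B : Type} {n : ℕ} (a : A)
    (g g' : CGraph A n) (h h' : CGraph B n)
    (hg : g.Acyclic) (hh : h.Acyclic) (hgg' : g.le g') (hhh' : h.le h') :
    (∀ p q r, dirComp g a h p q → dirComp g a h q r → dirComp g a h p r) ∧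
    (∀ p q, p ≠ q → dirComp g a h p q →
      (dirComp g' a h' p q ∧ wtComp g a h p q ≤ wtComp g' a h' p q) ∨
      (dirComp g' a h' q p ∧ wtComp g a h p q < wtComp g' a h' q p)) :=
  ⟨hg.comp hh a, CGraph.comp_le_comp hgg' hhh' a⟩
end

section
/- Let g be a directed complete graph on a finite set A with edge weights in {1,…,n}, containing a directed cycle but no directed cycle of uniform weight. For a cycle c, let μ(c) = (μₙ(c), μₙ₋₁(c), …, μ₁(c)) where μᵢ(c) is the number of edges of weight i in c, and order cycles lexicographically by μ. Let c = (a₀ →^{w₁} a₁ → ⋯ →^{w_k} a_k = a₀) be a minimal cycle, let U ⊆ {1,…,k} be a nonempty set of indices i with wᵢ > 1, and let g_U be the graph obtained from g by reversing each edge a_{i-1} → aᵢ for i ∈ U and decreasing its weight by 1. Then g_U contains no cycle of uniform weight. -/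
open Classical

/-- A directed cycle `c 0 → c 1 → ⋯ → c k → c 0` (of length `k+1`) in `g`. -/
def IsCycle {A : Type} {n : ℕ} (g : CGraph A n) {k : ℕ} (c : Fin (k + 1) → A) : Prop :=
  ∀ i : Fin (k + 1), g.dir (c i) (c (i + 1))

/-- A cycle of uniform weight `w`. -/
def IsUniformCycle {A : Type} {n : ℕ} (g : CGraph A n) {k : ℕ} (c : Fin (k + 1) → A)
    (w : ℕ) : Prop :=
  ∀ i : Fin (k + 1), g.dir (c i) (c (i + 1)) ∧ g.wt (c i) (c (i + 1)) = w

/-- `μ_w(c)`: the number of edges of weight `w` in the cycle `c`. -/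
noncomputable def mu {A : Type} {n : ℕ} (g : CGraph A n) {k : ℕ} (c : Fin (k + 1) → A)
    (w : ℕ) : ℕ :=
  (Finset.univ.filter fun i : Fin (k + 1) => g.wt (c i) (c (i + 1)) = w).card

/-- The lexicographic order on the weight-count vectors `μ(c) = (μₙ(c), μₙ₋₁(c), …, μ₁(c))`,
comparing the counts for the largest weights first. -/
def MuLt {A : Type} {n : ℕ} (g : CGraph A n) {k l : ℕ} (c : Fin (k + 1) → A)
    (d : Fin (l + 1) → A) : Prop :=
  ∃ w, mu g c w < mu g d w ∧ ∀ v, w < v → mu g c v = mu g d v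

/-- The direction relation of the modified graph `g_U`: the edges `c i → c (i+1)` for `i ∈ U`
are reversed, all other edges are unchanged. -/
def dirU {A : Type} {n : ℕ} (g : CGraph A n) {k : ℕ} (c : Fin (k + 1) → A)
    (U : Finset (Fin (k + 1))) (x y : A) : Prop :=
  (∃ i ∈ U, x = c (i + 1) ∧ y = c i) ∨
    (g.dir x y ∧ ¬ ∃ i ∈ U, x = c i ∧ y = c (i + 1))

/-- The weight function of the modified graph `g_U`: the weights of the edges
`c i → c (i+1)` for `i ∈ U` are decreased by `1`, all other weights are unchanged. -/
noncomputable def wtU {A : Type} {n : ℕ} (g : CGraph A n) {k : ℕ} (c : Fin (k + 1) → A)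
    (U : Finset (Fin (k + 1))) (x y : A) : ℕ :=
  if ∃ i ∈ U, (x = c i ∧ y = c (i + 1)) ∨ (x = c (i + 1) ∧ y = c i) then
    g.wt x y - 1
  else g.wt x y

/-!
A uniform cycle `d` of weight `w` in `g_U` uses two kinds of edges: unchanged edges of `g` of
weight `w`, and reversed edges `c (q + 1) → c q` whose weight in `g` is `w + 1`. Without reversed
edges `d` is uniform in `g`. With only reversed edges, `d` runs backwards through the whole simple
cycle `c`, which is then uniform of weight `w + 1`. Otherwise `d` contains a path of weight-`w`
edges of `g` from `c m` to `c (j + 1)`, where `c (j + 1) → c j` is the next reversed edge; closed up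
by the arc of `c` from `c (j + 1)` to `c m`, it gives a cycle of `g` that loses the edge `j` of
weight `w + 1` and gains only edges of weight `w`, hence is lexicographically below `c`.
-/

open Fin.NatCast Fin.CommRing

theorem Fin.forall_of_add_one_imp {k : ℕ} {R : Fin (k + 1) → Prop} {a : Fin (k + 1)} (ha : R a)
    (hR : ∀ i, R (i + 1) → R i) (i : Fin (k + 1)) : R i := by
  have key : ∀ t : ℕ, R (a - t) := by
    intro t
    induction t with
    | zero => simpa using ha
    | succ t ih =>
      apply hR
      convert ih using 2
      push_cast
      ring
  simpa using key (a - i).val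

theorem Fin.exists_gap {l : ℕ} {R : Fin (l + 1) → Prop} {i₀ i₁ : Fin (l + 1)} (h₀ : R i₀)
    (h₁ : ¬ R i₁) :
    ∃ p : Fin (l + 1), ∃ s : ℕ, 0 < s ∧ R p ∧ (∀ x < s, ¬ R (p + 1 + x)) ∧ R (p + 1 + s) := by
  by_contra! H
  refine Fin.forall_of_add_one_imp (R := fun i => ¬ R i) h₁ (fun p hp hRp => hp ?_) i₀ h₀
  have hwrap : ∃ t : ℕ, R (p + 1 + t) := ⟨l, by
    rwa [add_assoc, add_comm (1 : Fin (l + 1)), ← Nat.cast_add_one, Fin.natCast_self, add_zero]⟩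
  rcases Nat.eq_zero_or_pos (Nat.find hwrap) with h | h
  · simpa [h] using Nat.find_spec hwrap
  · exact absurd (Nat.find_spec hwrap) (H p _ h hRp fun x hx => Nat.find_min hwrap hx)

theorem forall_of_forall_backward_step {A : Type} {k l : ℕ} {c : Fin (k + 1) → A}
    (hc : Function.Injective c) {d : Fin (l + 1) → A} {P : Fin (k + 1) → Prop}
    (hd : ∀ i, ∃ q, d i = c (q + 1) ∧ d (i + 1) = c q ∧ P q) (j : Fin (k + 1)) : P j := by
  have hvisit : ∀ j, ∃ i, d i = c j := by
    obtain ⟨q, hq, -⟩ := hd 0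
    refine Fin.forall_of_add_one_imp (a := q + 1) ⟨0, hq⟩ ?_
    rintro j ⟨i, hi⟩
    obtain ⟨q, hq1, hq2, -⟩ := hd i
    obtain rfl : q = j := add_right_cancel (hc (hq1.symm.trans hi))
    exact ⟨i + 1, hq2⟩
  obtain ⟨i, hi⟩ := hvisit (j + 1)
  obtain ⟨q, hq1, -, hP⟩ := hd i
  rwa [add_right_cancel (hc (hq1.symm.trans hi))] at hP

section

variable {A : Type} {n : ℕ} (g : CGraph A n)

noncomputable def walkMu (V : ℕ → A) (N v : ℕ) : ℕ :=
  ∑ x ∈ Finset.range N, if g.wt (V x) (V (x + 1)) = v then 1 else 0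

theorem walkMu_congr {V V' : ℕ → A} {N : ℕ} (h : ∀ x ≤ N, V x = V' x) (v : ℕ) :
    walkMu g V N v = walkMu g V' N v :=
  Finset.sum_congr rfl fun x hx => by
    rw [Finset.mem_range] at hx
    rw [h x hx.le, h (x + 1) hx]

theorem walkMu_add (V : ℕ → A) (a b v : ℕ) :
    walkMu g V (a + b) v = walkMu g V a v + walkMu g (fun x => V (a + x)) b v := by
  simp only [walkMu, Finset.sum_range_add, add_assoc]

theorem walkMu_mono (V : ℕ → A) {a b : ℕ} (h : a ≤ b) (v : ℕ) :
    walkMu g V a v ≤ walkMu g V b v :=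
  Finset.sum_le_sum_of_subset (Finset.range_mono h)

theorem walkMu_succ (V : ℕ → A) (N v : ℕ) :
    walkMu g V (N + 1) v = walkMu g V N v + if g.wt (V N) (V (N + 1)) = v then 1 else 0 :=
  Finset.sum_range_succ _ _

theorem walkMu_eq_zero {V : ℕ → A} {N v : ℕ} (h : ∀ x < N, g.wt (V x) (V (x + 1)) ≠ v) :
    walkMu g V N v = 0 :=
  Finset.sum_eq_zero fun x hx => if_neg (h x (Finset.mem_range.1 hx))

theorem apply_val_add_one_of_periodic {N : ℕ} {V : ℕ → A} (hV : V (N + 1) = V 0)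
    (i : Fin (N + 1)) : V ↑(i + 1) = V (↑i + 1) := by
  rw [Fin.val_add_one]
  split_ifs with h
  · rw [h, Fin.val_last, hV]
  · rfl

theorem isCycle_of_periodic {N : ℕ} {V : ℕ → A} (hV : V (N + 1) = V 0)
    (hstep : ∀ x ≤ N, g.dir (V x) (V (x + 1))) : IsCycle g (fun i : Fin (N + 1) => V i) :=
  fun i => by
    simp only [apply_val_add_one_of_periodic hV]
    exact hstep i (Nat.lt_succ_iff.1 i.isLt)

theorem mu_eq_walkMu_of_periodic {N : ℕ} {V : ℕ → A} (hV : V (N + 1) = V 0) (v : ℕ) :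
    mu g (fun i : Fin (N + 1) => V i) v = walkMu g V (N + 1) v := by
  rw [mu, Finset.card_filter, walkMu,
    ← Fin.sum_univ_eq_sum_range (fun x => if g.wt (V x) (V (x + 1)) = v then 1 else 0)]
  simp only [apply_val_add_one_of_periodic hV]

theorem mu_rotate {k : ℕ} (c : Fin (k + 1) → A) (r : Fin (k + 1)) (v : ℕ) :
    mu g (fun i => c (r + i)) v = mu g c v := by
  simp only [mu, Finset.card_filter, ← add_assoc]
  exact Equiv.sum_comp (Equiv.addLeft r) fun i => if g.wt (c i) (c (i + 1)) = v then 1 else 0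

theorem mu_eq_walkMu {k : ℕ} (c : Fin (k + 1) → A) (r : Fin (k + 1)) (v : ℕ) :
    mu g c v = walkMu g (fun x => c (r + x)) (k + 1) v := by
  rw [← mu_rotate g c r, ← mu_eq_walkMu_of_periodic g (V := fun x : ℕ => c (r + x))]
  · simp only [Fin.cast_val_eq_self]
  · simp

theorem muLt_of_le_of_lt {k l : ℕ} {c : Fin (k + 1) → A} {d : Fin (l + 1) → A} {w : ℕ}
    (hle : ∀ v, w ≤ v → mu g d v ≤ mu g c v) (hlt : mu g d w < mu g c w) : MuLt g d c := by
  set S := (Finset.univ.image fun i => g.wt (c i) (c (i + 1))).filter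
    fun v => w ≤ v ∧ mu g d v < mu g c v
  have mem_S : ∀ v, w ≤ v → mu g d v < mu g c v → v ∈ S := by
    intro v hwv hv
    obtain ⟨i, hi⟩ := Finset.card_pos.1 (Nat.zero_lt_of_lt hv)
    simp only [Finset.mem_filter, Finset.mem_univ, true_and] at hi
    simp only [S, Finset.mem_filter, Finset.mem_image, Finset.mem_univ, true_and]
    exact ⟨⟨i, hi⟩, hwv, hv⟩
  have hS : S.Nonempty := ⟨w, mem_S w le_rfl hlt⟩
  obtain ⟨-, hwu, hu⟩ := Finset.mem_filter.1 (S.max'_mem hS)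
  refine ⟨S.max' hS, hu, fun v hv => (hle v (hwu.trans hv.le)).eq_or_lt.resolve_right fun hlt' => ?_⟩
  exact absurd (S.le_max' v (mem_S v (hwu.trans hv.le) hlt')) (not_le.2 hv)

theorem exists_muLt_of_shortcut {k : ℕ} {c : Fin (k + 1) → A} (hc : IsCycle g c) {P : ℕ → A}
    {s w : ℕ} (hs : 0 < s) (hP : ∀ x < s, g.dir (P x) (P (x + 1)) ∧ g.wt (P x) (P (x + 1)) = w)
    {j m : Fin (k + 1)} (hP0 : P 0 = c m) (hPs : P s = c (j + 1))
    (hj : g.wt (c j) (c (j + 1)) = w + 1) :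
    ∃ (l : ℕ) (d : Fin (l + 1) → A), IsCycle g d ∧ MuLt g d c := by
  set C : ℕ → A := fun x => c (j + 1 + x)
  set len := (m - (j + 1)).val
  set V : ℕ → A := fun x => if x < s then P x else C (x - s)
  have hVP : ∀ x ≤ s, V x = P x := by
    intro x hx
    rcases hx.lt_or_eq with h | rfl
    · simp [V, h]
    · simp [V, C, hPs]
  have hVC : ∀ x, V (s + x) = C x := by simp [V]
  have hCstep : ∀ x, g.dir (C x) (C (x + 1)) := by
    intro x
    simpa [C, add_assoc] using hc (j + 1 + x)
  have hlen : s - 1 + len + 1 = s + len := by omega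
  have hclosed : V (s - 1 + len + 1) = V 0 := by
    rw [hlen, hVC, hVP 0 (Nat.zero_le _), hP0]
    simp [C, len]
  have hcyc : IsCycle g (fun i : Fin (s - 1 + len + 1) => V i) := by
    refine isCycle_of_periodic g hclosed fun x _ => ?_
    rcases lt_or_ge x s with hx | hx
    · rw [hVP x hx.le, hVP (x + 1) hx]
      exact (hP x hx).1
    · obtain ⟨y, rfl⟩ := Nat.exists_eq_add_of_le hx
      rw [hVC, add_assoc, hVC]
      exact hCstep y
  have hmuV : ∀ v, w < v → mu g (fun i : Fin (s - 1 + len + 1) => V i) v = walkMu g C len v := by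
    intro v hv
    rw [mu_eq_walkMu_of_periodic g hclosed, hlen, walkMu_add, walkMu_congr g hVP,
      walkMu_eq_zero g fun x hx => by rw [(hP x hx).2]; omega]
    simp only [hVC, zero_add]
  have hmuc : ∀ v, mu g c v = walkMu g C k v + if g.wt (c j) (c (j + 1)) = v then 1 else 0 := by
    have hk : (k : Fin (k + 1)) + 1 = 0 := by exact_mod_cast Fin.natCast_self (k + 1)
    have hCk : C k = c j := by simp only [C, add_assoc, add_comm (1 : Fin (k + 1)), hk, add_zero]
    have hCk1 : C (k + 1) = c (j + 1) := by simp only [C, Fin.natCast_self, add_zero]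
    intro v
    rw [mu_eq_walkMu g c (j + 1)]
    change walkMu g C (k + 1) v = _
    rw [walkMu_succ, hCk, hCk1]
  have hlen_le : len ≤ k := Nat.lt_succ_iff.1 (m - (j + 1)).isLt
  refine ⟨_, _, hcyc, muLt_of_le_of_lt g (w := w + 1) (fun v hv => ?_) ?_⟩
  · rw [hmuV v (by omega), hmuc]
    exact (walkMu_mono g C hlen_le v).trans (Nat.le_add_right _ _)
  · rw [hmuV (w + 1) (by omega), hmuc, if_pos hj]
    exact Nat.lt_succ_of_le (walkMu_mono g C hlen_le _)

theorem dir_wt_of_not_reversed {k : ℕ} {c : Fin (k + 1) → A} {U : Finset (Fin (k + 1))} {x y : A}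
    {w : ℕ} (hdir : dirU g c U x y) (hwt : wtU g c U x y = w)
    (hrev : ¬ ∃ q ∈ U, x = c (q + 1) ∧ y = c q) : g.dir x y ∧ g.wt x y = w := by
  obtain hrev' | ⟨hxy, hfwd⟩ := hdir
  · exact absurd hrev' hrev
  refine ⟨hxy, ?_⟩
  rwa [wtU, if_neg] at hwt
  rintro ⟨q, hq, h | h⟩
  exacts [hfwd ⟨q, hq, h⟩, hrev ⟨q, hq, h⟩]

theorem wt_eq_of_reversed {k : ℕ} {c : Fin (k + 1) → A} {U : Finset (Fin (k + 1))} {q : Fin (k + 1)}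
    {x y : A} {w : ℕ} (hq : q ∈ U) (hpos : 1 ≤ g.wt (c q) (c (q + 1))) (hx : x = c (q + 1))
    (hy : y = c q) (hwt : wtU g c U x y = w) : g.wt (c q) (c (q + 1)) = w + 1 := by
  subst hx hy
  rw [wtU, if_pos ⟨q, hq, Or.inr ⟨rfl, rfl⟩⟩, g.wt_symm] at hwt
  omega

end

theorem statement3_general {A : Type} {n : ℕ} (g : CGraph A n)
    (hnouniform : ¬ ∃ (k : ℕ) (c : Fin (k + 1) → A) (w : ℕ), IsUniformCycle g c w)
    {k : ℕ} (c : Fin (k + 1) → A) (hc : IsCycle g c) (hcinj : Function.Injective c)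
    (hmin : ∀ (l : ℕ) (d : Fin (l + 1) → A), IsCycle g d → ¬ MuLt g d c)
    (U : Finset (Fin (k + 1)))
    (hUw : ∀ i ∈ U, 2 ≤ g.wt (c i) (c (i + 1))) :
    ¬ ∃ (l : ℕ) (d : Fin (l + 1) → A) (w : ℕ),
        ∀ i : Fin (l + 1), dirU g c U (d i) (d (i + 1)) ∧ wtU g c U (d i) (d (i + 1)) = w := by
  rintro ⟨l, d, w, hd⟩
  set Rev : Fin (l + 1) → Prop := fun i => ∃ q ∈ U, d i = c (q + 1) ∧ d (i + 1) = c q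
  have hfwd : ∀ i, ¬ Rev i → g.dir (d i) (d (i + 1)) ∧ g.wt (d i) (d (i + 1)) = w :=
    fun i => dir_wt_of_not_reversed g (hd i).1 (hd i).2
  have hheavy : ∀ i q, q ∈ U → d i = c (q + 1) → d (i + 1) = c q →
      g.wt (c q) (c (q + 1)) = w + 1 :=
    fun i q hq h1 h2 => wt_eq_of_reversed g hq (one_le_two.trans (hUw q hq)) h1 h2 (hd i).2
  by_cases hnone : ∀ i, ¬ Rev i
  · exact hnouniform ⟨l, d, w, fun i => hfwd i (hnone i)⟩
  obtain ⟨i₀, hi₀⟩ := Classical.not_forall_not.1 hnone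
  by_cases hall : ∀ i, Rev i
  · refine hnouniform ⟨k, c, w + 1, fun j => ⟨hc j, ?_⟩⟩
    refine forall_of_forall_backward_step hcinj (d := d)
      (P := fun j => g.wt (c j) (c (j + 1)) = w + 1) (fun i => ?_) j
    obtain ⟨q, hq, h1, h2⟩ := hall i
    exact ⟨q, h1, h2, hheavy i q hq h1 h2⟩
  obtain ⟨i₁, hi₁⟩ := not_forall.1 hall
  obtain ⟨p, s, hs, ⟨m, -, -, hm⟩, hgap, ⟨j, hj, hj1, hj2⟩⟩ := Fin.exists_gap hi₀ hi₁
  have hpath : ∀ x < s, g.dir (d (p + 1 + x)) (d (p + 1 + (x + 1 : ℕ))) ∧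
      g.wt (d (p + 1 + x)) (d (p + 1 + (x + 1 : ℕ))) = w := by
    intro x hx
    simpa [add_assoc] using hfwd _ (hgap x hx)
  obtain ⟨l', d', hd', hlt⟩ := exists_muLt_of_shortcut g hc hs hpath (by simpa using hm) hj1
    (hheavy _ j hj hj1 hj2)
  exact hmin l' d' hd' hlt

/-- if `g` contains a cycle but no cycle of uniform weight, `c` is a
(simple) cycle which is minimal for the lexicographic order on `μ`, and `U` is a nonempty
set of indices of edges of `c` of weight `> 1`, then the graph `g_U` obtained by reversing
those edges and decreasing their weights by `1` contains no cycle of uniform weight. -/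
theorem statement3 {A : Type} {n : ℕ} (g : CGraph A n)
    (hcycle : ∃ (k : ℕ) (c : Fin (k + 1) → A), IsCycle g c)
    (hnouniform : ¬ ∃ (k : ℕ) (c : Fin (k + 1) → A) (w : ℕ), IsUniformCycle g c w)
    {k : ℕ} (c : Fin (k + 1) → A) (hc : IsCycle g c) (hcinj : Function.Injective c)
    (hmin : ∀ (l : ℕ) (d : Fin (l + 1) → A), IsCycle g d → ¬ MuLt g d c)
    (U : Finset (Fin (k + 1))) (hU : U.Nonempty)
    (hUw : ∀ i ∈ U, 2 ≤ g.wt (c i) (c (i + 1))) :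
    ¬ ∃ (l : ℕ) (d : Fin (l + 1) → A) (w : ℕ),
        ∀ i : Fin (l + 1), dirU g c U (d i) (d (i + 1)) ∧ wtU g c U (d i) (d (i + 1)) = w :=
  statement3_general g hnouniform c hc hcinj hmin U hUw
end

section
/- Let c ∈ 𝒞ₙ(A) be a configuration of disjoint little n-cubes indexed by A inside [0,1]ⁿ, with each cube c_a a rectilinear embedding. Define φ(c) to be the complete directed graph on A where the edge between a and b has weight i if i is the smallest coordinate index such that c_a and c_b are separated by a hyperplane {xᵢ = t}, directed from a to b if c_a lies on the side xᵢ < t. Then φ(c) contains no directed cycle of uniform weight, i.e. φ(c) ∈ 𝒢ₙᵉˣᵗ(A). -/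
/-! Two disjoint open boxes have disjoint projections onto some coordinate axis, and two disjoint
nonempty open intervals lie one after the other; so distinct cubes are separated in some
coordinate. A directed cycle of uniform weight `i` would make the lower `i`-th face coordinate
strictly increase all the way around a finite cycle, which is impossible at its maximum. -/

lemma le_or_le_of_disjoint_Ioo {α : Type*} [LinearOrder α] [DenselyOrdered α] {a a' b b' : α}
    (ha : a < a') (hb : b < b') (h : Disjoint (Set.Ioo a a') (Set.Ioo b b')) :
    a' ≤ b ∨ b' ≤ a := by
  rw [Set.Ioo_disjoint_Ioo, min_le_iff, le_max_iff, le_max_iff] at h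
  rcases h with (h | h) | (h | h)
  · exact absurd h ha.not_ge
  · exact Or.inl h
  · exact Or.inr h
  · exact absurd h hb.not_ge

lemma exists_separated_of_disjoint_pi_Ioo {ι : Type*} {a a' b b' : ι → ℝ}
    (ha : ∀ i, a i < a' i) (hb : ∀ i, b i < b' i)
    (h : Disjoint (Set.univ.pi fun i => Set.Ioo (a i) (a' i))
      (Set.univ.pi fun i => Set.Ioo (b i) (b' i))) :
    ∃ i, a' i ≤ b i ∨ b' i ≤ a i := by
  obtain ⟨i, hi⟩ := Set.disjoint_univ_pi.1 h
  exact ⟨i, le_or_le_of_disjoint_Ioo (ha i) (hb i) hi⟩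

lemma not_forall_lt_apply_comp {α β : Type*} [Finite α] [Nonempty α] [LinearOrder β]
    (f : α → β) (σ : α → α) : ¬ ∀ x, f x < f (σ x) := fun h =>
  let ⟨x, hx⟩ := Finite.exists_max f
  (h x).not_ge (hx (σ x))

theorem statement5_general {A : Type} {n : ℕ} (v u : A → Fin n → ℝ)
    (hu : ∀ a i, 0 < u a i)
    (hdisj : ∀ a b, a ≠ b →
      Disjoint (Set.univ.pi fun i => Set.Ioo (v a i) (v a i + u a i))
        (Set.univ.pi fun i => Set.Ioo (v b i) (v b i + u b i))) :
    (∀ a b, a ≠ b → ∃ i : Fin n, v a i + u a i ≤ v b i ∨ v b i + u b i ≤ v a i) ∧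
    ¬ ∃ (k : ℕ) (d : Fin (k + 1) → A) (i : Fin n),
        ∀ j : Fin (k + 1),
          v (d j) i + u (d j) i ≤ v (d (j + 1)) i ∧
          ∀ i' : Fin n, i' < i →
            ¬ (v (d j) i' + u (d j) i' ≤ v (d (j + 1)) i') ∧
            ¬ (v (d (j + 1)) i' + u (d (j + 1)) i' ≤ v (d j) i') := by
  have hlt : ∀ a i, v a i < v a i + u a i := fun a i => lt_add_of_pos_right _ (hu a i)
  refine ⟨fun a b hab => exists_separated_of_disjoint_pi_Ioo (hlt a) (hlt b) (hdisj a b hab), ?_⟩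
  rintro ⟨k, d, i, hcycle⟩
  exact not_forall_lt_apply_comp (fun j => v (d j) i) (· + 1) fun j =>
    (hlt (d j) i).trans_le (hcycle j).1

/-- for a configuration `c` of pairwise disjoint little `n`-cubes in `[0,1]ⁿ`
(the cube `c_a` being the open box `∏ᵢ (v a i, v a i + u a i)`), the separation graph `φ(c)`
is a complete directed weighted graph (any two distinct cubes are `i`-separated for some `i`)
containing no directed cycle of uniform weight, i.e. `φ(c) ∈ 𝒢ₙᵉˣᵗ(A)`.  Here the edge between
`a` and `b` is weighted by the smallest `i` such that `c_a` and `c_b` are `i`-separated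
(`i`-separation of `a` below `b` meaning `v a i + u a i ≤ v b i`), directed towards the cube
which is `i`-above. -/
theorem statement5 {A : Type} {n : ℕ} (v u : A → Fin n → ℝ)
    (hu : ∀ a i, 0 < u a i) (hv : ∀ a i, 0 ≤ v a i) (hv1 : ∀ a i, v a i + u a i ≤ 1)
    (hdisj : ∀ a b, a ≠ b →
      Disjoint (Set.univ.pi fun i => Set.Ioo (v a i) (v a i + u a i))
        (Set.univ.pi fun i => Set.Ioo (v b i) (v b i + u b i))) :
    (∀ a b, a ≠ b → ∃ i : Fin n, v a i + u a i ≤ v b i ∨ v b i + u b i ≤ v a i) ∧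
    ¬ ∃ (k : ℕ) (d : Fin (k + 1) → A) (i : Fin n),
        ∀ j : Fin (k + 1),
          v (d j) i + u (d j) i ≤ v (d (j + 1)) i ∧
          ∀ i' : Fin n, i' < i →
            ¬ (v (d j) i' + u (d j) i' ≤ v (d (j + 1)) i') ∧
            ¬ (v (d (j + 1)) i' + u (d (j + 1)) i' ≤ v (d j) i') :=
  statement5_general v u hu hdisj
end

section
/- For a k-simplex x of the Barratt-Eccles simplicial set Γ(A) and a,b ∈ A, the weights satisfy w_{dᵢx}(a,b) ≤ w_x(a,b) for each face map dᵢ and w_{sⱼx}(a,b) = w_x(a,b) for each degeneracy sⱼ. Consequently Γₙ(A) = {x ∈ Γ(A) | w_x(a,b) ≤ n for all a,b} is a simplicial subset of Γ(A). -/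
open Classical

/-- `r` is a strict linear order. -/
def IsSLO {A : Type} (r : A → A → Prop) : Prop :=
  (∀ a, ¬ r a a) ∧ (∀ a b c, r a b → r b c → r a c) ∧ (∀ a b, a ≠ b → r a b ∨ r b a)

/-- The weight `w_x(a,b)` of a `k`-simplex `x = (L₀ → ⋯ → L_k)` of the Barratt–Eccles
simplicial set `Γ(A)`: `1` plus the number of steps in which the relative order of `a` and
`b` changes. -/
noncomputable def wBE {A : Type} {k : ℕ} (L : Fin (k + 1) → A → A → Prop) (a b : A) : ℕ :=
  1 + (Finset.univ.filter fun i : Fin k =>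
        ¬ (L i.castSucc a b ↔ L i.succ a b)).card

/-!
`w_x(a,b) - 1` is the number of changes in the sequence of truth values `Lᵢ a b`, so only
this sequence matters. A face map deletes one term: the two steps through the deleted term
merge into one, which is a change only if one of them was (triangle inequality for `≠`).
A degeneracy repeats one term and so adds a step that is never a change.
-/

namespace Fin

variable {α : Type*}

noncomputable def changeCount {n : ℕ} (f : Fin (n + 1) → α) : ℕ :=
  (Finset.univ.filter fun i : Fin n => f i.castSucc ≠ f i.succ).card

theorem changeCount_eq_changeCount_tail_add {n : ℕ} (f : Fin (n + 2) → α) :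
    changeCount f = changeCount (tail f) + if f 0 = f 1 then 0 else 1 := by
  rw [changeCount, changeCount, Finset.card_filter, Finset.card_filter, sum_univ_succ, add_comm]
  congr 1
  exact ite_not _ _ _

theorem changeCount_comp_succAbove_le :
    ∀ {n : ℕ} (f : Fin (n + 2) → α) (i : Fin (n + 2)),
      changeCount (f ∘ i.succAbove) ≤ changeCount f
  | 0, f, i => by simp [changeCount]
  | n + 1, f, i => by
    rw [changeCount_eq_changeCount_tail_add f]
    induction i using Fin.cases with
    | zero => exact Nat.le_add_right (changeCount (tail f)) _
    | succ i =>
      rw [changeCount_eq_changeCount_tail_add]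
      induction i using Fin.cases with
      | zero =>
        have htail : tail (f ∘ (succ 0 : Fin (n + 3)).succAbove) = tail (tail f) := by
          ext j; simp [tail]
        have triangle : (if f 0 = f 2 then 0 else 1) ≤
            (if f 1 = f 2 then 0 else 1) + (if f 0 = f 1 then 0 else 1) := by
          split_ifs <;> simp_all
        rw [htail, changeCount_eq_changeCount_tail_add (tail f)]
        change changeCount _ + (if f 0 = f 2 then 0 else 1) ≤
          changeCount _ + (if f 1 = f 2 then 0 else 1) + (if f 0 = f 1 then 0 else 1)
        omega
      | succ i =>
        have htail : tail (f ∘ i.succ.succ.succAbove) = tail f ∘ i.succ.succAbove := by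
          ext j; simp [tail, succ_succAbove_succ]
        simpa [htail, succ_succAbove_one] using changeCount_comp_succAbove_le (tail f) i.succ

theorem changeCount_comp_predAbove_zero {n : ℕ} (f : Fin (n + 1) → α) :
    changeCount (f ∘ predAbove 0) = changeCount f := by
  have htail : tail (f ∘ predAbove 0) = f := by ext i; simp [tail]
  simp [changeCount_eq_changeCount_tail_add (f ∘ predAbove 0), htail]

theorem changeCount_comp_predAbove :
    ∀ {n : ℕ} (f : Fin (n + 1) → α) (j : Fin (n + 1)),
      changeCount (f ∘ j.predAbove) = changeCount f
  | 0, f, j => by rw [fin_one_eq_zero j, changeCount_comp_predAbove_zero]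
  | n + 1, f, j => by
    induction j using Fin.cases with
    | zero => exact changeCount_comp_predAbove_zero f
    | succ j =>
      have htail : tail (f ∘ j.succ.predAbove) = tail f ∘ j.predAbove := by
        ext i; simp [tail, succ_predAbove_succ]
      have h1 : j.succ.predAbove 1 = 1 := by simpa using succ_predAbove_succ j 0
      rw [changeCount_eq_changeCount_tail_add, changeCount_eq_changeCount_tail_add f, htail,
        changeCount_comp_predAbove (tail f) j]
      simp [h1]

end Fin

theorem wBE_eq_one_add_changeCount {A : Type} {k : ℕ} (L : Fin (k + 1) → A → A → Prop)
    (a b : A) : wBE L a b = 1 + Fin.changeCount fun i => L i a b := by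
  simp only [wBE, Fin.changeCount, ne_eq, eq_iff_iff]

/-- for a simplex `x` of `Γ(A)` and `a, b ∈ A`, the weights satisfy
`w_{dᵢ x}(a,b) ≤ w_x(a,b)` for each face map `dᵢ` (which deletes the `i`-th linear order)
and `w_{sⱼ x}(a,b) = w_x(a,b)` for each degeneracy `sⱼ` (which repeats the `j`-th linear
order); consequently the sets `Γₙ(A) = {x | w_x(a,b) ≤ n for all a,b}` form a simplicial
subset of `Γ(A)`. -/
theorem statement12 {A : Type} (a b : A) :
    (∀ (k : ℕ) (L : Fin (k + 2) → A → A → Prop), (∀ i, IsSLO (L i)) →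
      ∀ i : Fin (k + 2), wBE (fun j => L (i.succAbove j)) a b ≤ wBE L a b) ∧
    (∀ (k : ℕ) (L : Fin (k + 1) → A → A → Prop), (∀ i, IsSLO (L i)) →
      ∀ j : Fin (k + 1), wBE (fun i => L (j.predAbove i)) a b = wBE L a b) := by
  refine ⟨fun k L _ i => ?_, fun k L _ j => ?_⟩
  · rw [wBE_eq_one_add_changeCount, wBE_eq_one_add_changeCount]
    exact Nat.add_le_add_left (Fin.changeCount_comp_succAbove_le (fun i => L i a b) i) 1
  · rw [wBE_eq_one_add_changeCount, wBE_eq_one_add_changeCount]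
    exact congrArg (1 + ·) (Fin.changeCount_comp_predAbove (fun i => L i a b) j)
end

section
/- The decomposability condition for an acyclic weighted complete graph g with underlying linear order x₀ → ⋯ → x_l — that there exists an index i such that every edge from x_j (j ≤ i) to x_k (k ≥ i+1) has the same weight as the edge xᵢ → xᵢ₊₁, and the induced subgraphs on {x₀,…,xᵢ} and {xᵢ₊₁,…,x_l} are recursively decomposable — is equivalent to the path condition: for every a,b and every directed path a = a₀ → ⋯ → a_k = b in g, there exists an index i with all edges a_p → a_q (p ≤ i < q) having equal weight. -/
/-- Recursive decomposability of (the restriction to a subset `S` of the vertices of) an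
acyclic weighted complete graph `g`: either `S` has at most one element, or `S` splits as
`S₁ ∪ S₂` with all edges directed from `S₁` to `S₂` and all of the same weight (so `S₁` is
an initial segment `{x₀,…,xᵢ}` and `S₂` the complementary final segment of the underlying
linear order, and all cross edges have the weight of the edge `xᵢ → xᵢ₊₁`), with both
parts recursively decomposable. -/
inductive Decomp {A : Type} [DecidableEq A] {n : ℕ} (g : CGraph A n) : Finset A → Prop
  | of_small : ∀ S : Finset A, S.card ≤ 1 → Decomp g S
  | of_split : ∀ S S₁ S₂ : Finset A, S₁.Nonempty → S₂.Nonempty → Disjoint S₁ S₂ →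
      S₁ ∪ S₂ = S → (∀ x ∈ S₁, ∀ y ∈ S₂, g.dir x y) →
      (∃ w, ∀ x ∈ S₁, ∀ y ∈ S₂, g.wt x y = w) →
      Decomp g S₁ → Decomp g S₂ → Decomp g S

/-!
An edge of a path never leads from the second part of a split back to the first, so a path
through a decomposable set either stays inside one part, where induction applies, or crosses
from the first part to the second exactly once, and the crossing is a cut.

Conversely, the path condition rules out closed walks: for a walk with `a₀ = a_k`, the pairs
`(0, k)` and `(i, i + 1)` straddle every cut `i` but have weights `0` and `≥ 1`. Hence `g.dir` is
a strict total order, and listing a set in this order gives a path whose cut splits the set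
as decomposability requires.
-/

namespace Finset

variable {α : Type*} [DecidableEq α] {s t : Finset α}

lemma ssubset_union_left_of_disjoint (h : Disjoint s t) (ht : t.Nonempty) : s ⊂ s ∪ t := by
  obtain ⟨x, hx⟩ := ht
  exact (ssubset_iff_of_subset subset_union_left).2 ⟨x, mem_union_right _ hx, disjoint_right.1 h hx⟩

lemma ssubset_union_right_of_disjoint (h : Disjoint s t) (hs : s.Nonempty) : t ⊂ s ∪ t :=
  union_comm t s ▸ ssubset_union_left_of_disjoint h.symm hs

end Finset

lemma Fin.exists_castSucc_and_not_succ {k : ℕ} {P : Fin (k + 1) → Prop} (h0 : P 0)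
    (hlast : ¬ P (Fin.last k)) : ∃ i : Fin k, P i.castSucc ∧ ¬ P i.succ := by
  by_contra! h
  exact hlast (Fin.induction (motive := P) h0 h _)

namespace CGraph

variable {A : Type} {n : ℕ} (g : CGraph A n)

def IsPath {k : ℕ} (p : Fin (k + 2) → A) : Prop :=
  ∀ j : Fin (k + 1), g.dir (p j.castSucc) (p j.succ)

def HasCut {k : ℕ} (p : Fin (k + 2) → A) : Prop :=
  ∃ i : Fin (k + 1), ∃ w, ∀ s t : Fin (k + 2),
    s ≤ i.castSucc → i.succ ≤ t → g.wt (p s) (p t) = w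

variable {g}

lemma ne_of_dir {a b : A} (h : g.dir a b) : a ≠ b :=
  fun hab => g.dir_irrefl b (hab ▸ h)

lemma dir_asymm_s15 {a b : A} (h : g.dir a b) : ¬ g.dir b a :=
  (g.dir_total a b (ne_of_dir h)).mp h

lemma HasCut.head_ne_last {k : ℕ} {p : Fin (k + 2) → A} (hc : g.HasCut p) (hp : g.IsPath p) :
    p 0 ≠ p (Fin.last _) := by
  obtain ⟨i, w, hw⟩ := hc
  intro h
  have h0 : g.wt (p 0) (p (Fin.last _)) = w := hw _ _ (Fin.zero_le _) (Fin.le_last _)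
  have h1 : g.wt (p i.castSucc) (p i.succ) = w := hw _ _ le_rfl le_rfl
  have := g.wt_pos _ _ (ne_of_dir (hp i))
  rw [h, g.wt_irrefl] at h0
  omega

lemma acyclic_of_forall_hasCut (H : ∀ k (p : Fin (k + 2) → A), g.IsPath p → g.HasCut p) :
    g.Acyclic := by
  intro a b c hab hbc
  have hp₃ : g.IsPath ![a, b, c] := fun j => by fin_cases j <;> assumption
  have hac : a ≠ c := (H _ _ hp₃).head_ne_last hp₃
  refine (g.dir_total a c hac).mpr fun hca => ?_
  have hp₄ : g.IsPath ![a, b, c, a] := fun j => by fin_cases j <;> assumption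
  exact (H _ _ hp₄).head_ne_last hp₄ rfl

lemma Acyclic.isStrictTotalOrder (hg : g.Acyclic) : IsStrictTotalOrder A g.dir where
  trichotomous a b hab hba := by_contra fun hne => hba ((g.dir_total b a (Ne.symm hne)).mpr hab)
  irrefl := g.dir_irrefl
  trans := hg

lemma Acyclic.exists_increasing_enum (hg : g.Acyclic) (S : Finset A) {m : ℕ} (hm : S.card = m) :
    ∃ p : Fin m → A, (∀ s t, s < t → g.dir (p s) (p t)) ∧ ∀ a, a ∈ S ↔ ∃ s, p s = a := by
  classical
  have := hg.isStrictTotalOrder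
  let _ : LinearOrder A := linearOrderOfSTO g.dir
  refine ⟨S.orderEmbOfFin hm, fun s t hst => (S.orderEmbOfFin hm).strictMono hst, fun a => ?_⟩
  rw [← Finset.mem_coe, ← S.range_orderEmbOfFin hm, Set.mem_range]

end CGraph

namespace Decomp

open CGraph

variable {A : Type} {n : ℕ} {g : CGraph A n} [DecidableEq A]

lemma hasCut {S : Finset A} (hS : Decomp g S) {k : ℕ} {p : Fin (k + 2) → A}
    (hp : g.IsPath p) (hpS : ∀ j, p j ∈ S) : g.HasCut p := by
  induction hS with
  | of_small S hS =>
    have := Finset.one_lt_card.2 ⟨_, hpS _, _, hpS _, ne_of_dir (hp 0)⟩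
    omega
  | of_split S S₁ S₂ _ _ _ hunion hdir hwt _ _ ih₁ ih₂ =>
    obtain ⟨w, hw⟩ := hwt
    have mem₂ : ∀ j, p j ∉ S₁ → p j ∈ S₂ := fun j hj =>
      ((Finset.mem_union.1 (hunion ▸ hpS j)).resolve_left hj)
    have anti : Antitone (fun j => p j ∈ S₁) := Fin.antitone_iff_succ_le.2 fun j hj =>
      by_contra fun h => dir_asymm_s15 (hp j) (hdir _ hj _ (mem₂ _ h))
    by_cases hlast : p (Fin.last _) ∈ S₁
    · exact ih₁ fun j => anti (Fin.le_last j) hlast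
    by_cases h0 : p 0 ∈ S₁
    · obtain ⟨i, hi, hi'⟩ := Fin.exists_castSucc_and_not_succ (P := (p · ∈ S₁)) h0 hlast
      exact ⟨i, w, fun s t hs ht => hw _ (anti hs hi) _ (mem₂ _ fun h => hi' (anti ht h))⟩
    · exact ih₂ fun j => mem₂ j fun h => h0 (anti (Fin.zero_le j) h)

theorem of_forall_hasCut (H : ∀ k (p : Fin (k + 2) → A), g.IsPath p → g.HasCut p)
    (S : Finset A) : Decomp g S := by
  have hg := acyclic_of_forall_hasCut H
  induction S using Finset.strongInduction with | _ S ih => ?_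
  rcases le_or_gt S.card 1 with hS | hS
  · exact .of_small S hS
  obtain ⟨k, hk⟩ : ∃ k, S.card = k + 2 := ⟨S.card - 2, by omega⟩
  obtain ⟨p, hp, hpS⟩ := hg.exists_increasing_enum S hk
  obtain ⟨i, w, hw⟩ := H k p fun j => hp _ _ j.castSucc_lt_succ
  set S₁ := (Finset.Iic i.castSucc).image p
  set S₂ := (Finset.Ici i.succ).image p
  have hdir : ∀ x ∈ S₁, ∀ y ∈ S₂, g.dir x y := by
    simp only [S₁, S₂, Finset.forall_mem_image, Finset.mem_Iic, Finset.mem_Ici]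
    exact fun s hs t ht => hp s t (hs.trans_lt (Fin.castSucc_lt_iff_succ_le.2 ht))
  have hwt : ∀ x ∈ S₁, ∀ y ∈ S₂, g.wt x y = w := by
    simp only [S₁, S₂, Finset.forall_mem_image, Finset.mem_Iic, Finset.mem_Ici]
    exact fun s hs t ht => hw s t hs ht
  have hunion : S₁ ∪ S₂ = S := by
    ext a
    simp only [S₁, S₂, hpS, ← Finset.image_union, Finset.mem_image, Finset.mem_union,
      Finset.mem_Iic, Finset.mem_Ici, ← Fin.castSucc_lt_iff_succ_le, le_or_gt, true_and]
  have hdisj : Disjoint S₁ S₂ :=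
    Finset.disjoint_left.2 fun a ha hb => g.dir_irrefl a (hdir a ha a hb)
  have h₁ : S₁.Nonempty := ⟨_, Finset.mem_image_of_mem p (Finset.mem_Iic.2 le_rfl)⟩
  have h₂ : S₂.Nonempty := ⟨_, Finset.mem_image_of_mem p (Finset.mem_Ici.2 le_rfl)⟩
  exact .of_split S S₁ S₂ h₁ h₂ hdisj hunion hdir ⟨w, hwt⟩
    (ih _ (hunion ▸ Finset.ssubset_union_left_of_disjoint hdisj h₂))
    (ih _ (hunion ▸ Finset.ssubset_union_right_of_disjoint hdisj h₁))

end Decomp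

theorem statement15_general {A : Type} [DecidableEq A] [Fintype A] {n : ℕ}
    (g : CGraph A n) :
    Decomp g Finset.univ ↔
    (∀ (k : ℕ) (p : Fin (k + 2) → A),
      (∀ j : Fin (k + 1), g.dir (p j.castSucc) (p j.succ)) →
      ∃ i : Fin (k + 1), ∃ w, ∀ s t : Fin (k + 2),
        s ≤ i.castSucc → i.succ ≤ t → g.wt (p s) (p t) = w) :=
  ⟨fun hd _ _ hp => hd.hasCut hp fun _ => Finset.mem_univ _,
    fun H => Decomp.of_forall_hasCut H _⟩

/-- for an acyclic weighted complete graph `g` on a finite vertex set, the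
recursive decomposability condition is equivalent to the path condition: along every
directed path `a₀ → ⋯ → a_k` there is an index `i` such that all edges `a_p → a_q` with
`p ≤ i < q` have the same weight. -/
theorem statement15 {A : Type} [DecidableEq A] [Fintype A] {n : ℕ}
    (g : CGraph A n) (hg : g.Acyclic) :
    Decomp g Finset.univ ↔
    (∀ (k : ℕ) (p : Fin (k + 2) → A),
      (∀ j : Fin (k + 1), g.dir (p j.castSucc) (p j.succ)) →
      ∃ i : Fin (k + 1), ∃ w, ∀ s t : Fin (k + 2),
        s ≤ i.castSucc → i.succ ≤ t → g.wt (p s) (p t) = w) :=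
  statement15_general g
end

section
/- For a lattice path x = (A ←f L →α [n]) and elements a ≠ b ∈ A, define w_x(a,b) = |L|_{a,b}/∼| − 1, where L|_{a,b} = f⁻¹(a) ∪ f⁻¹(b) and l ∼ l′ (for l < l′) iff f is constant on {m ∈ L|_{a,b} : l ≤ m ≤ l′}. Then for every simplicial operator ρ*: ℒ(A;n)_{a↦m} → ℒ(A;n)_{a↦k} induced by a monotone map ρ: [k] → [m], and all pairs {x,y} ⊆ A, one has w_{ρ*z}(x,y) ≤ w_z(x,y). Consequently ℒ_m(A;n) = {z | w(z) ≤ m} is closed under all simplicial and cosimplicial operators. -/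
/-- The weight `w_z(x,y)` of a lattice path `A ←f L → [n]` between `x` and `y`:
the number of alternation boundaries in the restriction of `f` to `f⁻¹{x,y}`
(i.e. the number of equivalence classes minus one).  It does not depend on the
augmentation `α : L → [n]`. -/
def wgt {L A : Type} [LinearOrder L] [Fintype L] [DecidableEq A]
    (f : L → A) (x y : A) : ℕ :=
  (Finset.univ.filter fun p : L × L =>
    p.1 < p.2 ∧ (f p.1 = x ∨ f p.1 = y) ∧ (f p.2 = x ∨ f p.2 = y) ∧ f p.1 ≠ f p.2 ∧
      ∀ q, p.1 < q → q < p.2 → f q ≠ x ∧ f q ≠ y).card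

/-- The linear order `L[[k]/[m]]` underlying the simplicial operator `ρ*` in the
`a`-direction: the fibre `f⁻¹(a) ≅ [m]` (via `e`) is replaced by `[k]` according to
`ρ : [k] → [m]`; the new element `j ∈ [k]` is placed at the position of the old element
`ρ(j)`, and elements of `[k]` at the same position are ordered among themselves. -/
def NewL {L A : Type} [LinearOrder L] [Fintype L] [DecidableEq L] [DecidableEq A]
    (f : L → A) (a : A) {m k : ℕ} (e : Fin (m + 1) ≃o {l : L // f l = a})
    (ρ : Fin (k + 1) →o Fin (m + 1)) : Type :=
  {p : Lex (L × Fin (k + 2)) //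
    (f (ofLex p).1 ≠ a ∧ (ofLex p).2 = 0) ∨
    (∃ j : Fin (k + 1), (ofLex p).1 = (e (ρ j) : L) ∧ (ofLex p).2 = j.succ)}

noncomputable instance {L A : Type} [LinearOrder L] [Fintype L] [DecidableEq L]
    [DecidableEq A] (f : L → A) (a : A) {m k : ℕ}
    (e : Fin (m + 1) ≃o {l : L // f l = a}) (ρ : Fin (k + 1) →o Fin (m + 1)) :
    Fintype (NewL f a e ρ) := by
  classical
  unfold NewL
  have : Fintype (Lex (L × Fin (k + 2))) := Fintype.ofEquiv _ toLex
  exact Fintype.ofFinite _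

instance {L A : Type} [LinearOrder L] [Fintype L] [DecidableEq L] [DecidableEq A]
    (f : L → A) (a : A) {m k : ℕ} (e : Fin (m + 1) ≃o {l : L // f l = a})
    (ρ : Fin (k + 1) →o Fin (m + 1)) : LinearOrder (NewL f a e ρ) := by
  unfold NewL; infer_instance

/-- The labelling of `L[[k]/[m]]` by symbols of `A`: old elements keep their symbol,
the new elements of `[k]` are labelled `a`. -/
def newF {L A : Type} [LinearOrder L] [Fintype L] [DecidableEq L] [DecidableEq A]
    (f : L → A) (a : A) {m k : ℕ} (e : Fin (m + 1) ≃o {l : L // f l = a})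
    (ρ : Fin (k + 1) →o Fin (m + 1)) (p : NewL f a e ρ) : A :=
  if (ofLex p.1).2 = 0 then f (ofLex p.1).1 else a

/-!
The new path is `f ∘ π` for the monotone projection `π : L[[k]/[m]] → L`, which is bijective
away from the fibre of `a`. A boundary of `f ∘ π` (consecutive elements of the preimage of
`{x, y}` with different labels) is sent to a boundary of `f` sharing its endpoint outside the
fibre of `a` (the right endpoint if the left one is labelled `a`, else the left one); the other
endpoint is the nearest element of the preimage of `{x, y}` in `L` on that side. Recording that
shared endpoint with its side makes the assignment injective.
-/

open Finset

namespace LatticePath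

variable {L M A : Type} [LinearOrder L] [LinearOrder M]

/-- The pairs counted by `wgt f x y`. -/
def IsBoundary (f : L → A) (x y : A) (l l' : L) : Prop :=
  l < l' ∧ (f l = x ∨ f l = y) ∧ (f l' = x ∨ f l' = y) ∧ f l ≠ f l' ∧
    ∀ q, l < q → q < l' → f q ≠ x ∧ f q ≠ y

open Classical in
theorem wgt_eq_card_isBoundary [Fintype L] [DecidableEq A] (f : L → A) (x y : A) :
    wgt f x y = #{p : L × L | IsBoundary f x y p.1 p.2} := by
  unfold wgt IsBoundary
  convert rfl

theorem IsBoundary.left_unique {f : L → A} {x y : A} {l₁ l₂ l' : L}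
    (h₁ : IsBoundary f x y l₁ l') (h₂ : IsBoundary f x y l₂ l') : l₁ = l₂ := by
  rcases lt_trichotomy l₁ l₂ with h | h | h
  · exact absurd h₂.2.1 (not_or.2 (h₁.2.2.2.2 l₂ h h₂.1))
  · exact h
  · exact absurd h₁.2.1 (not_or.2 (h₂.2.2.2.2 l₁ h h₁.1))

theorem IsBoundary.right_unique {f : L → A} {x y : A} {l l₁ l₂ : L}
    (h₁ : IsBoundary f x y l l₁) (h₂ : IsBoundary f x y l l₂) : l₁ = l₂ := by
  rcases lt_trichotomy l₁ l₂ with h | h | h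
  · exact absurd h₁.2.2.1 (not_or.2 (h₂.2.2.2.2 l₁ h₁.1 h))
  · exact h
  · exact absurd h₂.2.2.1 (not_or.2 (h₁.2.2.2.2 l₂ h₂.1 h))

theorem exists_last_before [Finite L] (p : L → Prop) {l l' : L} (hl : l < l') (hp : p l) :
    ∃ r, l ≤ r ∧ r < l' ∧ p r ∧ ∀ q, r < q → q < l' → ¬ p q := by
  obtain ⟨r, ⟨hlr, hrl', hr⟩, hmax⟩ :=
    (Set.toFinite {q | l ≤ q ∧ q < l' ∧ p q}).exists_maximal ⟨l, le_rfl, hl, hp⟩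
  refine ⟨r, hlr, hrl', hr, fun q hrq hql' hq => ?_⟩
  have hqr : q ≤ r := hmax ⟨hlr.trans hrq.le, hql', hq⟩ hrq.le
  exact lt_irrefl r (hrq.trans_le hqr)

theorem exists_first_after [Finite L] (p : L → Prop) {l l' : L} (hl : l < l') (hp : p l') :
    ∃ r, l < r ∧ r ≤ l' ∧ p r ∧ ∀ q, l < q → q < r → ¬ p q := by
  obtain ⟨r, hrl', hlr, hr, hmin⟩ :=
    exists_last_before (L := Lᵒᵈ) p (l := OrderDual.toDual l') (l' := OrderDual.toDual l) hl hp
  exact ⟨r, hlr, hrl', hr, fun q hlq hqr => hmin q hqr hlq⟩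

section Reparametrize

variable {π : M → L} (hπ : Monotone π) {f : L → A} {a x y : A}
  (hsurj : ∀ l, f l ≠ a → ∃ P, π P = l)
include hπ

theorem IsBoundary.map_lt {P Q : M} (hb : IsBoundary (f ∘ π) x y P Q) : π P < π Q :=
  (hπ hb.1.le).lt_of_ne fun h => hb.2.2.2.1 (congrArg f h)

include hsurj

theorem IsBoundary.ne_and_ne_of_between {P Q : M} (hb : IsBoundary (f ∘ π) x y P Q) {r : L}
    (hPr : π P < r) (hrQ : r < π Q) (hr : f r ≠ a) : f r ≠ x ∧ f r ≠ y := by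
  obtain ⟨W, rfl⟩ := hsurj r hr
  exact hb.2.2.2.2 W (hπ.reflect_lt hPr) (hπ.reflect_lt hrQ)

variable [Finite L]

theorem IsBoundary.exists_isBoundary_map_right {P Q : M} (hb : IsBoundary (f ∘ π) x y P Q)
    (hP : f (π P) = a) : ∃ r, f r = a ∧ IsBoundary f x y r (π Q) := by
  obtain ⟨r, hPr, hrQ, hr, hgap⟩ :=
    exists_last_before (fun q => f q = x ∨ f q = y) (hb.map_lt hπ) hb.2.1
  have hra : f r = a := by
    by_contra hra
    have hPr' : π P < r := hPr.lt_of_ne fun h => hra (h ▸ hP)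
    have := hb.ne_and_ne_of_between hπ hsurj hPr' hrQ hra
    tauto
  refine ⟨r, hra, hrQ, hr, hb.2.2.1, ?_, fun q hrq hqQ => ?_⟩
  · rw [hra, ← hP]
    exact hb.2.2.2.1
  · have := hgap q hrq hqQ
    tauto

theorem IsBoundary.exists_isBoundary_map_left {P Q : M} (hb : IsBoundary (f ∘ π) x y P Q)
    (hP : f (π P) ≠ a) : ∃ r, IsBoundary f x y (π P) r := by
  obtain ⟨r, hPr, hrQ, hr, hgap⟩ :=
    exists_first_after (fun q => f q = x ∨ f q = y) (hb.map_lt hπ) hb.2.2.1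
  refine ⟨r, hPr, hb.2.1, hr, fun hPr_eq => ?_, fun q hPq hqr => ?_⟩
  · have hrQ' : r < π Q := hrQ.lt_of_ne fun h => hb.2.2.2.1 (hPr_eq.trans (congrArg f h))
    have := hb.ne_and_ne_of_between hπ hsurj hPr hrQ' (hPr_eq ▸ hP)
    tauto
  · have := hgap q hPq hqr
    tauto

end Reparametrize

theorem wgt_comp_le [Fintype L] [Fintype M] [DecidableEq A] {π : M → L} (hπ : Monotone π)
    {f : L → A} {a : A} (hsurj : ∀ l, f l ≠ a → ∃ P, π P = l)
    (hinj : ∀ P Q, f (π P) ≠ a → π P = π Q → P = Q) (x y : A) :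
    wgt (f ∘ π) x y ≤ wgt f x y := by
  classical
  let key : L × L → L ⊕ L := fun p => if f p.1 = a then .inl p.2 else .inr p.1
  rw [wgt_eq_card_isBoundary, wgt_eq_card_isBoundary]
  refine (card_le_card_of_injOn (key ∘ Prod.map π π) ?_ ?_).trans
    (card_image_le (f := key))
  · rintro ⟨P, Q⟩ hb
    simp only [coe_filter, mem_univ, true_and, Set.mem_ofPred_eq] at hb
    by_cases hP : f (π P) = a
    · obtain ⟨r, hra, hr⟩ := hb.exists_isBoundary_map_right hπ hsurj hP
      exact mem_image.2 ⟨(r, π Q), by simpa using hr, by simp [key, hP, hra]⟩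
    · obtain ⟨r, hr⟩ := hb.exists_isBoundary_map_left hπ hsurj hP
      exact mem_image.2 ⟨(π P, r), by simpa using hr, by simp [key, hP]⟩
  · rintro ⟨P, Q⟩ hb ⟨P', Q'⟩ hb' heq
    simp only [coe_filter, mem_univ, true_and, Set.mem_ofPred_eq] at hb hb'
    by_cases hP : f (π P) = a <;> by_cases hP' : f (π P') = a <;>
      simp only [key, Function.comp_apply, Prod.map_fst, Prod.map_snd, hP, hP', if_true,
        if_false, reduceCtorEq, Sum.inl.injEq, Sum.inr.injEq] at heq
    · have hQ : f (π Q) ≠ a := fun h => hb.2.2.2.1 (hP.trans h.symm)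
      obtain rfl := hinj Q Q' hQ heq
      rw [hb.left_unique hb']
    · obtain rfl := hinj P P' hP heq
      rw [hb.right_unique hb']

end LatticePath

namespace NewL

variable {L A : Type} [LinearOrder L] [Fintype L] [DecidableEq L] [DecidableEq A]
  {f : L → A} {a : A} {m k : ℕ} {e : Fin (m + 1) ≃o {l : L // f l = a}}
  {ρ : Fin (k + 1) →o Fin (m + 1)}

def base (P : NewL f a e ρ) : L := (ofLex P.1).1

theorem monotone_base : Monotone (base : NewL f a e ρ → L) :=
  fun _ _ h => Prod.Lex.monotone_fst _ _ h

theorem newF_apply (P : NewL f a e ρ) : newF f a e ρ P = f P.base := by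
  unfold newF base
  rcases P.2 with hp | ⟨j, hj, hj'⟩
  · rw [if_pos hp.2]
  · rw [if_neg (hj' ▸ Fin.succ_ne_zero j), hj]
    exact (e (ρ j)).2.symm

theorem exists_base_eq {l : L} (hl : f l ≠ a) : ∃ P : NewL f a e ρ, P.base = l :=
  ⟨⟨toLex (l, 0), .inl ⟨hl, rfl⟩⟩, rfl⟩

theorem snd_eq_zero_of_ne {P : NewL f a e ρ} (hP : f P.base ≠ a) : (ofLex P.1).2 = 0 := by
  rcases P.2 with hp | ⟨j, hj, -⟩
  · exact hp.2
  · exact absurd ((congrArg f hj).trans (e (ρ j)).2) hP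

theorem eq_of_base_eq {P Q : NewL f a e ρ} (hP : f P.base ≠ a) (h : P.base = Q.base) :
    P = Q := by
  have hQ : f Q.base ≠ a := h ▸ hP
  exact Subtype.ext (ofLex.injective (Prod.ext h
    ((snd_eq_zero_of_ne hP).trans (snd_eq_zero_of_ne hQ).symm)))

end NewL

theorem statement16_general {L A : Type} [LinearOrder L] [Fintype L] [DecidableEq L]
    [DecidableEq A] (f : L → A) (a : A) {m k : ℕ}
    (e : Fin (m + 1) ≃o {l : L // f l = a}) (ρ : Fin (k + 1) →o Fin (m + 1))
    (x y : A) :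
    wgt (newF f a e ρ) x y ≤ wgt f x y := by
  rw [show newF f a e ρ = f ∘ NewL.base from funext NewL.newF_apply]
  exact LatticePath.wgt_comp_le NewL.monotone_base (fun _ => NewL.exists_base_eq)
    (fun _ _ => NewL.eq_of_base_eq) x y

/-- for every simplicial operator `ρ* : ℒ(A;n)_{a↦m} → ℒ(A;n)_{a↦k}` in the
`a`-direction, induced by a monotone `ρ : [k] → [m]`, and every pair `x ≠ y` in `A`, the
weights satisfy `w_{ρ* z}(x,y) ≤ w_z(x,y)`; consequently (weights being untouched by the
cosimplicial operators) the sets `ℒ_m(A;n)` of lattice paths of weight at most `m` are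
closed under all simplicial and cosimplicial operators. -/
theorem statement16 {L A : Type} [LinearOrder L] [Fintype L] [DecidableEq L]
    [DecidableEq A] (f : L → A) (hf : Function.Surjective f) (a : A) {m k : ℕ}
    (e : Fin (m + 1) ≃o {l : L // f l = a}) (ρ : Fin (k + 1) →o Fin (m + 1))
    (x y : A) (hxy : x ≠ y) :
    wgt (newF f a e ρ) x y ≤ wgt f x y :=
  statement16_general f a e ρ x y
end
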